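/- Every proper monomial ideal I in S = k[x_1,…,x_n] admits a Stanley filtration (x^{u_1},σ_1),…,(x^{u_m},σ_m) of S/I such that u_1 = 0 and, for every index i with u_i ≠ 0, there exist an index j < i and an ℓ ∉ σ_j with u_i = u_j + e_ℓ, where e_ℓ is the ℓ-th standard basis vector of ℕ^n. -/

import Mathlib

open MvPolynomial

open MvPolynomial

/-- `I` is a monomial ideal: it is generated by a set of monomials `x^u`. -/
def IsMonomialIdeal {k : Type} [Field k] {n : ℕ} (I : Ideal (MvPolynomial (Fin n) k)) : Prop :=
  ∃ G : Set (Fin n →₀ ℕ), I = Ideal.span ((fun u => (monomial u (1 : k))) '' G)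

/-- The set of exponent vectors of monomials in the pair `(x^u, σ)`. -/
def stanleyPairSet {n : ℕ} (u : Fin n →₀ ℕ) (σ : Finset (Fin n)) : Set (Fin n →₀ ℕ) :=
  {w | ∃ v : Fin n →₀ ℕ, (∀ i, v i ≠ 0 → i ∈ σ) ∧ w = u + v}

/-- A Stanley decomposition of `S/I`. -/
def IsStanleyDecomp {k : Type} [Field k] {n : ℕ} (I : Ideal (MvPolynomial (Fin n) k))
    (𝔖 : Finset ((Fin n →₀ ℕ) × Finset (Fin n))) : Prop :=
  (∀ p ∈ 𝔖, ∀ q ∈ 𝔖, p ≠ q → Disjoint (stanleyPairSet p.1 p.2) (stanleyPairSet q.1 q.2)) ∧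
  (⋃ p ∈ (𝔖 : Set ((Fin n →₀ ℕ) × Finset (Fin n))), stanleyPairSet p.1 p.2)
      = {w | monomial w (1 : k) ∉ I}

/-- A Stanley filtration of `S/I`: an ordered Stanley decomposition
`(x^{u_1},σ_1),…,(x^{u_m},σ_m)` such that for every `1 ≤ j ≤ m` the first `j` pairs form a
Stanley decomposition of `S/(I + ⟨x^{u_{j+1}},…,x^{u_m}⟩)`. -/
def IsStanleyFiltration {k : Type} [Field k] {n : ℕ} (I : Ideal (MvPolynomial (Fin n) k))
    (L : List ((Fin n →₀ ℕ) × Finset (Fin n))) : Prop :=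
  IsStanleyDecomp I L.toFinset ∧
  ∀ j : ℕ, 1 ≤ j → j ≤ L.length →
    IsStanleyDecomp
      (I ⊔ Ideal.span ((fun p : (Fin n →₀ ℕ) × Finset (Fin n) => monomial p.1 (1 : k)) ''
        {p | p ∈ L.drop j}))
      (L.take j).toFinset

/-! Let `I` be generated by the monomials `x^g`, `g ∈ G` with `G` finite, and let `a` be the join
of `G`. Then `x^w ∈ I` iff `x^(w ⊓ a) ∈ I`, and the exponents `w` with `w ⊓ a = u` are exactly
those of the pair `(x^u, {i | u_i = a_i})`. Hence the pairs indexed by the standard exponents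
`u ≤ a` form a Stanley decomposition of `S/I`. List them along a linear extension of the
componentwise order: a standard exponent lying above some `u` of the tail lies in the tail, so
every prefix decomposes the quotient by the tail. Standard exponents are closed downwards, so for
`u ≠ 0` with `u_ℓ ≠ 0` the exponent `u - e_ℓ` comes earlier, and `ℓ` is not in its set since its
`ℓ`-th coordinate is below `a_ℓ`. -/

section ListOrder

variable {α : Type*} [PartialOrder α]

theorem Finset.exists_nodup_list_pairwise_not_lt (s : Finset α) :
    ∃ L : List α, L.Nodup ∧ (∀ x, x ∈ L ↔ x ∈ s) ∧ L.Pairwise fun x y => ¬y < x := by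
  let t : Finset (LinearExtension α) := s
  refine ⟨t.sort, t.sort_nodup _, fun x => t.mem_sort _, ?_⟩
  exact (t.sortedLT_sort).pairwise.imp fun {x y : α}
    (hxy : toLinearExtension x < toLinearExtension y) (hyx : y < x) =>
      (toLinearExtension.monotone hyx.le).not_gt hxy

theorem List.Pairwise.index_lt_of_get_lt {L : List α} (hL : L.Pairwise fun x y => ¬y < x)
    {i j : Fin L.length} (h : L.get j < L.get i) : j < i := by
  rcases lt_trichotomy j i with hji | rfl | hij
  · exact hji
  · exact absurd h (lt_irrefl _)
  · exact absurd h (List.pairwise_iff_get.mp hL i j hij)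

theorem List.mem_take_iff_of_pairwise {L : List α} (hnd : L.Nodup)
    (hL : L.Pairwise fun x y => ¬y < x) (j : ℕ) {u : α} :
    u ∈ L.take j ↔ u ∈ L ∧ u ∉ upperClosure {v | v ∈ L.drop j} := by
  rw [← L.take_append_drop j] at hnd hL
  constructor
  · intro hu
    refine ⟨List.mem_of_mem_take hu, fun hup => ?_⟩
    obtain ⟨v, hv, hvu⟩ := mem_upperClosure.mp hup
    have hne : v ≠ u := fun h => List.disjoint_of_nodup_append hnd hu (h ▸ hv)
    exact (List.pairwise_append.mp hL).2.2 u hu v hv (lt_of_le_of_ne hvu hne)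
  · rintro ⟨hu, hnot⟩
    rw [← L.take_append_drop j, List.mem_append] at hu
    exact hu.resolve_right fun hd => hnot (mem_upperClosure.mpr ⟨u, hd, le_rfl⟩)

theorem List.Pairwise.get_zero_eq_of_forall_le {L : List α}
    (hL : L.Pairwise fun x y => ¬y < x) {b : α} (hb : b ∈ L) (hmin : ∀ x ∈ L, b ≤ x)
    (h : 0 < L.length) : L.get ⟨0, h⟩ = b := by
  obtain ⟨j, rfl⟩ := List.mem_iff_get.mp hb
  by_contra hne
  exact Nat.not_lt_zero _
    (hL.index_lt_of_get_lt (lt_of_le_of_ne (hmin _ (L.get_mem _)) (Ne.symm hne)))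

end ListOrder

theorem inf_mem_upperClosure_iff {α : Type*} [Lattice α] {s : Set α} {a w : α}
    (hs : ∀ g ∈ s, g ≤ a) : w ⊓ a ∈ upperClosure s ↔ w ∈ upperClosure s := by
  simp only [mem_upperClosure]
  exact ⟨fun ⟨g, hg, hgw⟩ => ⟨g, hg, hgw.trans inf_le_left⟩,
    fun ⟨g, hg, hgw⟩ => ⟨g, hg, le_inf hgw (hs g hg)⟩⟩

theorem MvPolynomial.monomial_one_mem_span_monomial_iff {σ R : Type*} [CommSemiring R]
    [Nontrivial R] {G : Set (σ →₀ ℕ)} {w : σ →₀ ℕ} :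
    monomial w (1 : R) ∈ Ideal.span ((fun u => monomial u (1 : R)) '' G) ↔
      w ∈ upperClosure G := by
  classical
  rw [mem_ideal_span_monomial_image, support_monomial, if_neg one_ne_zero]
  simp [mem_upperClosure]

theorem IsMonomialIdeal.exists_finset {k : Type} [Field k] {n : ℕ}
    {I : Ideal (MvPolynomial (Fin n) k)} (hI : IsMonomialIdeal I) :
    ∃ G : Finset (Fin n →₀ ℕ), I = Ideal.span ((fun u => monomial u (1 : k)) '' G) := by
  classical
  obtain ⟨G, rfl⟩ := hI
  obtain ⟨s, hsG, hs⟩ := (Submodule.fg_span_iff_fg_span_finset_subset _).mp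
    (IsNoetherian.noetherian (Ideal.span ((fun u => monomial u (1 : k)) '' G)))
  obtain ⟨G₀, -, rfl⟩ := Finset.subset_set_image_iff.mp hsG
  exact ⟨G₀, by rw [Finset.coe_image] at hs; exact hs⟩

section StanleyPairs

variable {n : ℕ}

def topCoords (a u : Fin n →₀ ℕ) : Finset (Fin n) := {i | u i = a i}

def stanleyPair (a u : Fin n →₀ ℕ) : (Fin n →₀ ℕ) × Finset (Fin n) := (u, topCoords a u)

theorem stanleyPairSet_topCoords {a u : Fin n →₀ ℕ} (hu : u ≤ a) :
    stanleyPairSet u (topCoords a u) = {w | w ⊓ a = u} := by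
  ext w
  simp only [stanleyPairSet, topCoords, Finset.mem_filter, Finset.mem_univ, true_and,
    Set.mem_ofPred_eq]
  constructor
  · rintro ⟨v, hv, rfl⟩
    ext i
    have hui := hu i
    have hvi := hv i
    simp only [Finsupp.inf_apply, Finsupp.add_apply]
    omega
  · rintro rfl
    refine ⟨w - w ⊓ a, fun i hi => ?_, (add_tsub_cancel_of_le inf_le_left).symm⟩
    simp only [Finsupp.tsub_apply, Finsupp.inf_apply] at hi ⊢
    omega

theorem isStanleyDecomp_map_stanleyPair {k : Type} [Field k] {G : Set (Fin n →₀ ℕ)}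
    {a : Fin n →₀ ℕ} (hG : ∀ g ∈ G, g ≤ a) {P : List (Fin n →₀ ℕ)}
    (hP : ∀ u, u ∈ P ↔ u ≤ a ∧ u ∉ upperClosure G) :
    IsStanleyDecomp (Ideal.span ((fun u => monomial u (1 : k)) '' G))
      (P.map (stanleyPair a)).toFinset := by
  classical
  have hpair : ∀ u ∈ P, stanleyPairSet u (topCoords a u) = {w | w ⊓ a = u} :=
    fun u hu => stanleyPairSet_topCoords ((hP u).mp hu).1
  constructor
  · simp only [List.mem_toFinset, List.mem_map]
    rintro _ ⟨u, hu, rfl⟩ _ ⟨v, hv, rfl⟩ hne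
    rw [stanleyPair, stanleyPair, hpair u hu, hpair v hv, Set.disjoint_left]
    rintro w rfl rfl
    exact hne rfl
  · ext w
    simp only [List.coe_toFinset, Set.mem_iUnion, Set.mem_ofPred_eq, List.mem_map, exists_prop,
      monomial_one_mem_span_monomial_iff]
    rw [← inf_mem_upperClosure_iff hG]
    constructor
    · rintro ⟨_, ⟨u, hu, rfl⟩, hw⟩
      rw [stanleyPair, hpair u hu] at hw
      exact ((hP _).mp (hw ▸ hu)).2
    · intro hw
      have hwP : w ⊓ a ∈ P := (hP _).mpr ⟨inf_le_right, hw⟩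
      exact ⟨_, ⟨_, hwP, rfl⟩, by rw [stanleyPair, hpair _ hwP]; rfl⟩

theorem isStanleyFiltration_map_stanleyPair {k : Type} [Field k] {G : Set (Fin n →₀ ℕ)}
    {a : Fin n →₀ ℕ} (hG : ∀ g ∈ G, g ≤ a) {L : List (Fin n →₀ ℕ)} (hnd : L.Nodup)
    (hL : L.Pairwise fun x y => ¬y < x) (hmem : ∀ u, u ∈ L ↔ u ≤ a ∧ u ∉ upperClosure G) :
    IsStanleyFiltration (Ideal.span ((fun u => monomial u (1 : k)) '' G))
      (L.map (stanleyPair a)) := by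
  refine ⟨isStanleyDecomp_map_stanleyPair hG hmem, fun j _ _ => ?_⟩
  have himage : (fun p : (Fin n →₀ ℕ) × Finset (Fin n) => monomial p.1 (1 : k)) ''
      {p | p ∈ (L.map (stanleyPair a)).drop j} =
        (fun u => monomial u (1 : k)) '' {u | u ∈ L.drop j} := by
    ext; simp [← List.map_drop, stanleyPair]
  rw [himage, ← Ideal.span_union, ← Set.image_union, ← List.map_take]
  refine isStanleyDecomp_map_stanleyPair ?_ fun u => ?_
  · rintro g (hg | hg)
    exacts [hG g hg, ((hmem g).mp (List.mem_of_mem_drop hg)).1]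
  · rw [List.mem_take_iff_of_pairwise hnd hL, hmem, upperClosure_union, UpperSet.mem_inf_iff]
    tauto

theorem exists_get_eq_add_single {G : Set (Fin n →₀ ℕ)} {a : Fin n →₀ ℕ}
    {L : List (Fin n →₀ ℕ)} (hL : L.Pairwise fun x y => ¬y < x)
    (hmem : ∀ u, u ∈ L ↔ u ≤ a ∧ u ∉ upperClosure G) {i : Fin L.length} (hi : L.get i ≠ 0) :
    ∃ j : Fin L.length, j < i ∧
      ∃ ℓ, ℓ ∉ topCoords a (L.get j) ∧ L.get i = L.get j + Finsupp.single ℓ 1 := by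
  obtain ⟨ℓ, hℓ⟩ : ∃ ℓ, L.get i ℓ ≠ 0 := by
    by_contra! h
    exact hi (Finsupp.ext h)
  set v := L.get i - Finsupp.single ℓ 1
  have hv : L.get i = v + Finsupp.single ℓ 1 :=
    (tsub_add_cancel_of_le (Finsupp.single_le_iff.mpr (Nat.one_le_iff_ne_zero.mpr hℓ))).symm
  have hvlt : v < L.get i := hv ▸ lt_add_of_pos_right v (by simp [pos_iff_ne_zero])
  obtain ⟨hia, hiG⟩ := (hmem _).mp (L.get_mem i)
  obtain ⟨j, hj⟩ := List.mem_iff_get.mp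
    ((hmem v).mpr ⟨hvlt.le.trans hia, fun h => hiG ((upperClosure G).upper hvlt.le h)⟩)
  refine ⟨j, hL.index_lt_of_get_lt (hj ▸ hvlt), ℓ, ?_, hj ▸ hv⟩
  have hℓa : v ℓ + 1 ≤ a ℓ := by
    have := hia ℓ
    rwa [hv, Finsupp.add_apply, Finsupp.single_eq_same] at this
  simp only [hj, topCoords, Finset.mem_filter, Finset.mem_univ, true_and]
  omega

end StanleyPairs

/-- every proper monomial ideal admits a Stanley filtration
`(x^{u_1},σ_1),…,(x^{u_m},σ_m)` with `u_1 = 0` and such that every `u_i ≠ 0` is obtained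
as `u_i = u_j + e_ℓ` for some earlier index `j < i` and some `ℓ ∉ σ_j`. -/
theorem exists_stanley_filtration_structured {k : Type} [Field k] {n : ℕ}
    (I : Ideal (MvPolynomial (Fin n) k)) (hmon : IsMonomialIdeal I) (hproper : I ≠ ⊤) :
    ∃ (m : ℕ) (hm : 0 < m) (f : Fin m → (Fin n →₀ ℕ) × Finset (Fin n)),
      IsStanleyFiltration I (List.ofFn f) ∧
      (f ⟨0, hm⟩).1 = 0 ∧
      ∀ i : Fin m, (f i).1 ≠ 0 →
        ∃ j : Fin m, (j : ℕ) < (i : ℕ) ∧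
          ∃ ℓ : Fin n, ℓ ∉ (f j).2 ∧ (f i).1 = (f j).1 + Finsupp.single ℓ 1 := by
  classical
  obtain ⟨G, rfl⟩ := hmon.exists_finset
  set a := G.sup id
  have hG : ∀ g ∈ (G : Set (Fin n →₀ ℕ)), g ≤ a := fun g hg => Finset.le_sup (f := id) hg
  obtain ⟨L, hnd, hmemF, hL⟩ := ((Finset.Iic a).filter
    (· ∉ upperClosure (G : Set (Fin n →₀ ℕ)))).exists_nodup_list_pairwise_not_lt
  have hmem : ∀ u, u ∈ L ↔ u ≤ a ∧ u ∉ upperClosure (G : Set (Fin n →₀ ℕ)) := by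
    simp [hmemF]
  have hzero : (0 : Fin n →₀ ℕ) ∈ L := by
    refine (hmem 0).mpr ⟨zero_le, fun h => hproper ?_⟩
    rw [Ideal.eq_top_iff_one, one_def]
    exact monomial_one_mem_span_monomial_iff.mpr h
  refine ⟨L.length, List.length_pos_of_mem hzero, fun i => stanleyPair a (L.get i), ?_,
    hL.get_zero_eq_of_forall_le hzero (fun _ _ => zero_le) _,
    fun i hi => exists_get_eq_add_single hL hmem hi⟩
  rw [List.ofFn_comp', List.ofFn_get]
  exact isStanleyFiltration_map_stanleyPair hG hnd hL hmem
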